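/- Let V be a finite set and w : V → ℕ. Then Σ_{U ⊆ V, |U| odd} (Π_{v ∈ U} N⁻(w(v))) · (Π_{v ∈ V∖U} N⁺(w(v))) = N⁻(Σ_{v ∈ V} w(v)), where the sum is over all subsets U of V of odd cardinality. -/
import Mathlib


open Finset

/-- `Nplus m = 2^(m-1)(2^m + 1)` is the number of even theta-characteristics
on a smooth curve of genus `m`. -/
def Nplus (m : ℕ) : ℕ := (4 ^ m + 2 ^ m) / 2

/-- `Nminus m = 2^(m-1)(2^m - 1)` is the number of odd theta-characteristics
on a smooth curve of genus `m`. -/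
def Nminus (m : ℕ) : ℕ := (4 ^ m - 2 ^ m) / 2

lemma two_dvd_add (m : ℕ) : 2 ∣ 4 ^ m + 2 ^ m := by
  cases m with
  | zero => decide
  | succ n =>
    exact Nat.dvd_add (dvd_pow (by norm_num) (by omega)) (dvd_pow_self 2 (by omega))

lemma two_dvd_sub (m : ℕ) : 2 ∣ 4 ^ m - 2 ^ m := by
  cases m with
  | zero => decide
  | succ n =>
    exact Nat.dvd_sub (dvd_pow (by norm_num) (by omega)) (dvd_pow_self 2 (by omega))

lemma pow_le_pow_4 (m : ℕ) : 2 ^ m ≤ 4 ^ m :=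
  Nat.pow_le_pow_left (by norm_num) m

lemma two_mul_Nplus (m : ℕ) : 2 * Nplus m = 4 ^ m + 2 ^ m := by
  rw [Nplus, Nat.mul_div_cancel' (two_dvd_add m)]

lemma two_mul_Nminus (m : ℕ) : 2 * Nminus m = 4 ^ m - 2 ^ m := by
  rw [Nminus, Nat.mul_div_cancel' (two_dvd_sub m)]

lemma int_two_mul_Nminus (m : ℕ) : 2 * (Nminus m : ℤ) = 4 ^ m - 2 ^ m := by
  have h := two_mul_Nminus m
  zify [pow_le_pow_4 m] at h
  linarith

lemma int_add (m : ℕ) : (Nminus m : ℤ) + Nplus m = 4 ^ m := by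
  have h1 := two_mul_Nplus m
  have h2 := int_two_mul_Nminus m
  zify at h1
  linarith

lemma int_sub (m : ℕ) : -(Nminus m : ℤ) + Nplus m = 2 ^ m := by
  have h1 := two_mul_Nplus m
  have h2 := int_two_mul_Nminus m
  zify at h1
  linarith

/-- The number of odd spin structures: the sum over odd-cardinality subsets `U` of `V`
of `∏_{v∈U} N⁻(w v) · ∏_{v∉U} N⁺(w v)` equals `N⁻(∑ w v)`. -/
theorem odd_spin_count (V : Type*) [Fintype V] [DecidableEq V] (w : V → ℕ) :
    ∑ U ∈ Finset.univ.powerset.filter (fun U : Finset V => Odd U.card),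
        (∏ v ∈ U, Nminus (w v)) * (∏ v ∈ Uᶜ, Nplus (w v)) =
      Nminus (∑ v, w v) := by
  set S := ∑ v, w v with hS
  have hcompl : ∀ U : Finset V, (Uᶜ : Finset V) = univ \ U := fun U => by
    simp [Finset.compl_eq_univ_sdiff]
  -- total sum = 4^S
  have htot : ∑ U ∈ (univ : Finset V).powerset,
      (∏ v ∈ U, (Nminus (w v) : ℤ)) * (∏ v ∈ univ \ U, (Nplus (w v) : ℤ)) = 4 ^ S := by
    rw [← Finset.prod_add]
    rw [show (4:ℤ) ^ S = ∏ v : V, (4:ℤ) ^ w v from (Finset.prod_pow_eq_pow_sum _ _ _).symm]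
    exact Finset.prod_congr rfl fun v _ => int_add (w v)
  -- signed sum = 2^S
  have hsign : ∑ U ∈ (univ : Finset V).powerset,
      (-1) ^ U.card * ((∏ v ∈ U, (Nminus (w v) : ℤ)) * (∏ v ∈ univ \ U, (Nplus (w v) : ℤ)))
      = 2 ^ S := by
    have h2 : ∀ U : Finset V,
        (-1 : ℤ) ^ U.card * ((∏ v ∈ U, (Nminus (w v) : ℤ)) * (∏ v ∈ univ \ U, (Nplus (w v) : ℤ)))
        = (∏ v ∈ U, (-(Nminus (w v) : ℤ))) * (∏ v ∈ univ \ U, (Nplus (w v) : ℤ)) := by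
      intro U
      have : ∏ v ∈ U, (-(Nminus (w v) : ℤ))
          = (-1 : ℤ) ^ U.card * ∏ v ∈ U, (Nminus (w v) : ℤ) := by
        rw [show (fun v => -(Nminus (w v) : ℤ)) = fun v => (-1 : ℤ) * (Nminus (w v) : ℤ) by
          funext v; ring, Finset.prod_mul_distrib, Finset.prod_const]
      rw [this]; ring
    simp_rw [h2]
    rw [← Finset.prod_add]
    rw [show (2:ℤ) ^ S = ∏ v : V, (2:ℤ) ^ w v from (Finset.prod_pow_eq_pow_sum _ _ _).symm]
    exact Finset.prod_congr rfl fun v _ => int_sub (w v)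
  -- split into odd and even parts
  set q : Finset V → ℤ := fun U =>
    (∏ v ∈ U, (Nminus (w v) : ℤ)) * (∏ v ∈ univ \ U, (Nplus (w v) : ℤ)) with hq
  set O := (univ : Finset V).powerset.filter (fun U => Odd U.card) with hO
  set E := (univ : Finset V).powerset.filter (fun U => ¬ Odd U.card) with hE
  have hsplit : ∑ U ∈ O, q U + ∑ U ∈ E, q U = 4 ^ S := by
    rw [← htot, Finset.sum_filter_add_sum_filter_not]
  have hsplit2 : -(∑ U ∈ O, q U) + ∑ U ∈ E, q U = 2 ^ S := by
    rw [← hsign, ← Finset.sum_filter_add_sum_filter_not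
      (univ : Finset V).powerset (fun U => Odd U.card)]
    congr 1
    · rw [neg_eq_iff_eq_neg, ← Finset.sum_neg_distrib]
      refine Finset.sum_congr rfl fun U hU => ?_
      rw [Finset.mem_filter] at hU
      rw [Odd.neg_one_pow hU.2]; ring
    · refine Finset.sum_congr rfl fun U hU => ?_
      rw [Finset.mem_filter] at hU
      rw [Even.neg_one_pow (Nat.not_odd_iff_even.mp hU.2), one_mul]
  have key := int_two_mul_Nminus S
  have hodd : ∑ U ∈ O, q U = (Nminus S : ℤ) := by linarith
  have hcast : ((∑ U ∈ O, (∏ v ∈ U, Nminus (w v)) * (∏ v ∈ Uᶜ, Nplus (w v)) : ℕ) : ℤ)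
      = ∑ U ∈ O, q U := by
    push_cast
    exact Finset.sum_congr rfl fun U _ => by rw [hq, hcompl U]
  exact_mod_cast hcast.trans hodd
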